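/- arXiv:math/0307003 — 2 statements merged into one kernel-verified Lean document; each statement's English description precedes it below -/
import Mathlib

section
/- The symmetric 3×3 integer matrix with rows (2n, 3, d), (3, 0, a), (d, a, -2) has signature (1,2) whenever n ≥ 4, d > 0, a > 0 are integers satisfying d > na/3 - 3/a. -/
/-!
The determinant of the matrix is `2 (3da - na² + 9)`, which is positive by hypothesis, so the
product of the three eigenvalues is positive: either all three are positive or exactly one is.
The diagonal entry `-2` rules out positive semidefiniteness, hence some eigenvalue is negative.
-/

open Matrix

open scoped ComplexOrder

theorem card_pos_eq_one_and_card_neg_eq_two_of_prod_pos {x : Fin 3 → ℝ}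
    (hprod : 0 < ∏ i, x i) (hneg : ∃ i, x i < 0) :
    Nat.card {i // 0 < x i} = 1 ∧ Nat.card {i // x i < 0} = 2 := by
  classical
  simp only [Nat.card_eq_fintype_card, Fintype.card_subtype, Finset.card_filter,
    Fin.sum_univ_three]
  rw [Fin.prod_univ_three] at hprod
  have hne : ∀ j, x j ≠ 0 := fun j hj => by
    fin_cases j <;> simp_all
  obtain ⟨i, hi⟩ := hneg
  rcases (hne 0).lt_or_gt with h0 | h0 <;> rcases (hne 1).lt_or_gt with h1 | h1 <;>
    rcases (hne 2).lt_or_gt with h2 | h2 <;>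
    simp [h0, h1, h2, h0.asymm, h1.asymm, h2.asymm, mul_pos_iff] at hprod ⊢
  exact hi.asymm (by fin_cases i <;> assumption)

theorem Matrix.IsHermitian.exists_eigenvalues_neg_of_diag_neg {𝕜 n : Type*} [RCLike 𝕜]
    [Fintype n] [DecidableEq n] {A : Matrix n n 𝕜} (hA : A.IsHermitian) {i : n}
    (hi : A i i < 0) : ∃ j, hA.eigenvalues j < 0 := by
  by_contra! h
  exact hi.not_ge (hA.posSemidef_iff_eigenvalues_nonneg.2 h).diag_nonneg

theorem Matrix.IsHermitian.prod_eigenvalues_eq_det {n : Type*} [Fintype n] [DecidableEq n]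
    {A : Matrix n n ℝ} (hA : A.IsHermitian) : ∏ i, hA.eigenvalues i = A.det := by
  simpa using hA.det_eq_prod_eigenvalues.symm

theorem stmt0_general (n d a : ℤ)
    (hineq : n * a ^ 2 - 9 < 3 * d * a)
    (M : Matrix (Fin 3) (Fin 3) ℝ)
    (hM : M = !![2 * (n : ℝ), 3, (d : ℝ); 3, 0, (a : ℝ); (d : ℝ), (a : ℝ), -2])
    (hHerm : M.IsHermitian) :
    Nat.card {i : Fin 3 // 0 < hHerm.eigenvalues i} = 1 ∧
    Nat.card {i : Fin 3 // hHerm.eigenvalues i < 0} = 2 := by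
  have hdet : M.det = 2 * ((3 * d * a - n * a ^ 2 + 9 : ℤ) : ℝ) := by
    subst hM
    rw [det_fin_three]
    simp only [of_apply, cons_val', cons_val_zero, cons_val_one, cons_val, cons_val_fin_one]
    push_cast
    ring
  have hdet_pos : 0 < M.det := by
    rw [hdet]
    have : (0 : ℤ) < 3 * d * a - n * a ^ 2 + 9 := by linarith
    positivity
  apply card_pos_eq_one_and_card_neg_eq_two_of_prod_pos
  · rwa [hHerm.prod_eigenvalues_eq_det]
  · exact hHerm.exists_eigenvalues_neg_of_diag_neg (i := 2) (by simp [hM])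

/-- The symmetric 3×3 integer matrix with rows (2n, 3, d), (3, 0, a), (d, a, -2)
has signature (1,2) whenever n ≥ 4, d > 0, a > 0 are integers with d > na/3 - 3/a
(equivalently 3da > na² - 9). -/
theorem stmt0 (n d a : ℤ) (hn : 4 ≤ n) (hd : 0 < d) (ha : 0 < a)
    (hineq : n * a ^ 2 - 9 < 3 * d * a)
    (M : Matrix (Fin 3) (Fin 3) ℝ)
    (hM : M = !![2 * (n : ℝ), 3, (d : ℝ); 3, 0, (a : ℝ); (d : ℝ), (a : ℝ), -2])
    (hHerm : M.IsHermitian) :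
    Nat.card {i : Fin 3 // 0 < hHerm.eigenvalues i} = 1 ∧
    Nat.card {i : Fin 3 // hHerm.eigenvalues i < 0} = 2 :=
  stmt0_general n d a hineq M hM hHerm
end

section
/- There are no integers x, y, z, a, d₀ with d₀ > 0, a > 0 satisfying 12x + 3y + d₀z = 0, 3x + az = 0, a not divisible by 3, and [a(6a - 3d₀) - 9]z² = -9. -/
/-- There are no integers x, y, z, a, d₀ with d₀ > 0, a > 0, 3 ∤ a satisfying
12x + 3y + d₀z = 0, 3x + az = 0 and [a(6a - 3d₀) - 9]z² = -9. -/
theorem stmt7 (x y z a d0 : ℤ) (hd : 0 < d0) (ha : 0 < a) (h3a : ¬ (3 ∣ a))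
    (h1 : 12 * x + 3 * y + d0 * z = 0) (h2 : 3 * x + a * z = 0)
    (h3 : (a * (6 * a - 3 * d0) - 9) * z ^ 2 = -9) :
    False := by
  have haz : (3 : ℤ) ∣ a * z := ⟨-x, by linarith⟩
  have hz : (3 : ℤ) ∣ z := by
    rcases ((Int.prime_three.dvd_mul.mp haz)) with h | h
    · exact absurd h h3a
    · exact h
  obtain ⟨m, hm⟩ := hz
  have : (27 : ℤ) ∣ -9 := ⟨(a * (2 * a - d0) - 3) * m ^ 2, by rw [← h3, hm]; ring⟩
  omega
end
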